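/- Convergence of the Kontsevich iterated-integral representation: Let k = (k_1,…,k_p) be a tuple of positive integers with k_1 ≥ 2 and n = k_1+…+k_p. Then the function H_{w(k)}(t) = Π_{i=1}^n h_{w(k)_i}(t_i), with h_1(t) = 1/(1−t) and h_0(t) = 1/t, is Lebesgue integrable on the open simplex Δ_n = {0 < t_1 < … < t_n < 1} and ∫_{Δ_n} H_{w(k)} = ζ(k_1,…,k_p). -/

import Mathlib

open MeasureTheory

/-- The multiple zeta value `ζ(k₁,…,k_p) = ∑_{n₁ > … > n_p > 0} 1/(n₁^{k₁} ⋯ n_p^{k_p})`. -/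
noncomputable def zeta (k : List ℕ) : ℝ :=
  ∑' n : {f : Fin k.length → ℕ // StrictAnti f ∧ ∀ i, 0 < f i},
    ∏ i : Fin k.length, (1 : ℝ) / (n.1 i : ℝ) ^ (k.get i)

/-- The word `w(k) = (1, 0^{k_p−1}, 1, 0^{k_{p−1}−1}, …, 1, 0^{k_1−1})` in `{0,1}`
(`true` standing for `1` and `false` for `0`) attached to the tuple `k = (k₁,…,k_p)`. -/
def word (k : List ℕ) : List Bool :=
  (k.reverse.map (fun a => true :: List.replicate (a - 1) false)).flatten

/-- `h 1 t = 1/(1−t)` and `h 0 t = 1/t`. -/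
noncomputable def h (b : Bool) (t : ℝ) : ℝ := if b then 1 / (1 - t) else 1 / t

/-- The open simplex `Δ_N = {0 < t₁ < … < t_N < 1}`. -/
def simplex (N : ℕ) : Set (Fin N → ℝ) :=
  {t | StrictMono t ∧ ∀ i, t i ∈ Set.Ioo (0 : ℝ) 1}

/-!
For `0 ≤ x ≤ 1` let `I_w(x)` be the integral of `H_w` over `{0 < t₁ < ⋯ < t_n < x}`. Integrating
out the largest variable gives `I_{w b}(x) = ∫₀ˣ h_b(s) I_w(s) ds`. On the multiple
polylogarithms `Li_e(x) = ∑_{n₁ > ⋯ > n_p > 0} x^{n₁} / (n₁^{e₁} ⋯ n_p^{e_p})`, multiplying by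
`1/s` and integrating raises `e₁` by one, while multiplying by `1/(1 - s) = ∑ sᵐ` and integrating
prepends a new index `1`. Reading `w(k)` letter by letter therefore gives `I_{w(k)} = Li_k`, and
`Li_k(1) = ζ(k)`. All of this happens in `ℝ≥0∞`, where Tonelli and monotone convergence hold
unconditionally. The value is finite when `k₁ ≥ 2`: summing out `n₁` with
`∑_{n > c} 1/n² ≤ 2/(c + 1)` bounds `ζ(k₁, k₂, k₃, …)` by `2 ζ(k₂ + 1, k₃, …)`.
-/

open Set
open scoped ENNReal

namespace Kontsevich

def simplexBelow (n : ℕ) (x : ℝ) : Set (Fin n → ℝ) :=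
  {t | StrictMono t ∧ ∀ i, t i ∈ Ioo 0 x}

theorem simplex_eq_simplexBelow (n : ℕ) : simplex n = simplexBelow n 1 := rfl

theorem measurableSet_simplexBelow (n : ℕ) (x : ℝ) : MeasurableSet (simplexBelow n x) := by
  have : simplexBelow n x =
      (⋂ (i) (j) (_ : i < j), {t : Fin n → ℝ | t i < t j}) ∩ univ.pi fun _ => Ioo 0 x := by
    ext t; simp [simplexBelow, StrictMono]
  rw [this]
  exact (MeasurableSet.iInter fun i => .iInter fun j => .iInter fun _ =>
    measurableSet_lt (measurable_pi_apply i) (measurable_pi_apply j)).inter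
    (.univ_pi fun _ => measurableSet_Ioo)

theorem snoc_mem_simplexBelow_iff {n : ℕ} {x s : ℝ} {u : Fin n → ℝ} :
    Fin.snoc u s ∈ simplexBelow (n + 1) x ↔ s ∈ Ioo 0 x ∧ u ∈ simplexBelow n s := by
  simp only [simplexBelow, mem_ofPred_eq]
  rw [← Fin.insertNth_last', Fin.strictMono_insertNth_iff, Fin.forall_fin_succ']
  simp only [Fin.insertNth_last', Fin.snoc_castSucc, Fin.snoc_last, Fin.castSucc_lt_last,
    Fin.last_le_iff, Fin.castSucc_ne_last, true_implies, false_implies, implies_true, mem_Ioo,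
    and_true]
  exact ⟨fun ⟨⟨hu, hus⟩, hu₀, hs⟩ => ⟨hs, hu, fun i => ⟨(hu₀ i).1, hus i⟩⟩,
    fun ⟨hs, hu, hus⟩ =>
      ⟨⟨hu, fun i => (hus i).2⟩, fun i => ⟨(hus i).1, (hus i).2.trans hs.2⟩, hs⟩⟩

theorem measurable_prod_apply {ι α M : Type*} [Fintype ι] [MeasurableSpace α] [CommMonoid M]
    [MeasurableSpace M] [MeasurableMul₂ M] {g : ι → α → M} (hg : ∀ i, Measurable (g i)) :
    Measurable fun t : ι → α => ∏ i, g i (t i) :=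
  Finset.measurable_prod _ fun i _ => (hg i).comp (measurable_pi_apply i)

noncomputable def iteratedIntegral {n : ℕ} (g : Fin n → ℝ → ℝ≥0∞) (x : ℝ) : ℝ≥0∞ :=
  ∫⁻ t in simplexBelow n x, ∏ i, g i (t i)

theorem iteratedIntegral_zero (g : Fin 0 → ℝ → ℝ≥0∞) (x : ℝ) : iteratedIntegral g x = 1 := by
  have : simplexBelow 0 x = univ :=
    eq_univ_of_forall fun _ => ⟨fun i => i.elim0, fun i => i.elim0⟩
  simp [iteratedIntegral, this, volume_pi]

theorem iteratedIntegral_cast {n m : ℕ} (hnm : n = m) (g : Fin n → ℝ → ℝ≥0∞) (x : ℝ) :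
    iteratedIntegral g x = iteratedIntegral (fun i => g (Fin.cast hnm.symm i)) x := by
  subst hnm; rfl

theorem indicator_simplexBelow_snoc {n : ℕ} (g : Fin n → ℝ → ℝ≥0∞) (g₀ : ℝ → ℝ≥0∞)
    (x s : ℝ) (u : Fin n → ℝ) :
    (simplexBelow (n + 1) x).indicator
        (fun t => ∏ i, (Fin.snoc g g₀ : Fin (n + 1) → ℝ → ℝ≥0∞) i (t i)) (Fin.snoc u s) =
      (Ioo 0 x).indicator
        (fun s => g₀ s * (simplexBelow n s).indicator (fun u => ∏ i, g i (u i)) u) s := by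
  by_cases hs : s ∈ Ioo 0 x <;> by_cases hu : u ∈ simplexBelow n s <;>
    simp [indicator, snoc_mem_simplexBelow_iff, hs, hu, Fin.prod_univ_castSucc, mul_comm]

theorem iteratedIntegral_snoc {n : ℕ} {g : Fin n → ℝ → ℝ≥0∞} {g₀ : ℝ → ℝ≥0∞}
    (hg : ∀ i, Measurable (g i)) (hg₀ : Measurable g₀) (x : ℝ) :
    iteratedIntegral (Fin.snoc g g₀) x = ∫⁻ s in Ioo 0 x, g₀ s * iteratedIntegral g s := by
  set F := (simplexBelow (n + 1) x).indicator
    fun t => ∏ i, (Fin.snoc g g₀ : Fin (n + 1) → ℝ → ℝ≥0∞) i (t i)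
  have hF : Measurable F := (measurable_prod_apply (Fin.lastCases (by simpa using hg₀)
    fun i => by simpa using hg i)).indicator (measurableSet_simplexBelow _ _)
  let e := MeasurableEquiv.piFinSuccAbove (fun _ : Fin (n + 1) => ℝ) (Fin.last n)
  have he : ∀ (s : ℝ) (u : Fin n → ℝ), e.symm (s, u) = Fin.snoc u s := fun s u => by
    simp [e, MeasurableEquiv.piFinSuccAbove_symm_apply, Fin.insertNthEquiv, Fin.insertNth_last']
  calc iteratedIntegral (Fin.snoc g g₀) x
      = ∫⁻ y : ℝ × (Fin n → ℝ), F (e.symm y) := by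
        rw [iteratedIntegral, ← lintegral_indicator (measurableSet_simplexBelow _ _),
          ((volume_preserving_piFinSuccAbove (fun _ => ℝ) (Fin.last n)).symm).lintegral_comp_emb
            e.symm.measurableEmbedding]
    _ = ∫⁻ s, (Ioo 0 x).indicator (fun s => g₀ s * iteratedIntegral g s) s := by
        rw [Measure.volume_eq_prod,
          lintegral_prod (fun y => F (e.symm y)) (hF.comp e.symm.measurable).aemeasurable]
        refine lintegral_congr fun s => ?_
        simp only [F, he, indicator_simplexBelow_snoc]
        by_cases hs : s ∈ Ioo 0 x
        · simp only [indicator_of_mem hs]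
          rw [lintegral_const_mul _
              ((measurable_prod_apply hg).indicator (measurableSet_simplexBelow _ _)),
            lintegral_indicator (measurableSet_simplexBelow _ _), iteratedIntegral, volume_pi]
        · simp [hs]
    _ = ∫⁻ s in Ioo 0 x, g₀ s * iteratedIntegral g s := lintegral_indicator measurableSet_Ioo _

theorem measurable_h (b : Bool) : Measurable (h b) := by
  unfold h; cases b <;> simp only [Bool.false_eq_true, if_true, if_false] <;> fun_prop

theorem h_nonneg (b : Bool) {s : ℝ} (hs : s ∈ Ioo (0 : ℝ) 1) : 0 ≤ h b s := by
  have hs₀ := hs.1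
  have hs₁ : 0 < 1 - s := sub_pos.2 hs.2
  cases b <;> simp only [h, Bool.false_eq_true, if_true, if_false] <;> positivity

theorem ofReal_h_false {s : ℝ} (hs : 0 < s) :
    ENNReal.ofReal (h false s) = (ENNReal.ofReal s)⁻¹ := by
  rw [h, if_neg Bool.false_ne_true, one_div, ENNReal.ofReal_inv_of_pos hs]

theorem ofReal_h_true {s : ℝ} (hs₀ : 0 ≤ s) (hs₁ : s < 1) :
    ENNReal.ofReal (h true s) = ∑' m, ENNReal.ofReal s ^ m := by
  rw [ENNReal.tsum_geometric, h, if_pos rfl, one_div, ENNReal.ofReal_inv_of_pos (by linarith),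
    ENNReal.ofReal_sub _ hs₀, ENNReal.ofReal_one]

noncomputable def wordIntegral (w : List Bool) (x : ℝ) : ℝ≥0∞ :=
  iteratedIntegral (fun i t => ENNReal.ofReal (h (w.get i) t)) x

theorem wordIntegral_nil (x : ℝ) : wordIntegral [] x = 1 :=
  iteratedIntegral_zero _ x

theorem wordIntegral_concat (w : List Bool) (b : Bool) (x : ℝ) :
    wordIntegral (w ++ [b]) x =
      ∫⁻ s in Ioo 0 x, ENNReal.ofReal (h b s) * wordIntegral w s := by
  have hlen : (w ++ [b]).length = w.length + 1 := by simp
  have hsnoc : (fun i t => ENNReal.ofReal (h ((w ++ [b]).get (Fin.cast hlen.symm i)) t)) =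
      Fin.snoc (fun i t => ENNReal.ofReal (h (w.get i) t)) (fun t => ENNReal.ofReal (h b t)) := by
    funext i
    cases i using Fin.lastCases <;> simp [List.getElem_append_left]
  rw [wordIntegral, iteratedIntegral_cast hlen, hsnoc, iteratedIntegral_snoc
    (fun _ => (measurable_h _).ennreal_ofReal) (measurable_h b).ennreal_ofReal]
  rfl

abbrev DecTuple (p : ℕ) := {f : Fin p → ℕ // StrictAnti f ∧ ∀ i, 0 < f i}

namespace DecTuple

instance : Unique (DecTuple 0) where
  default := ⟨Fin.elim0, fun i => i.elim0, fun i => i.elim0⟩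
  uniq _ := Subtype.ext (funext fun i => i.elim0)

/-- `0` on the empty tuple, so that `multiPolylog` of the empty index is `1`. -/
def lead : {p : ℕ} → DecTuple p → ℕ
  | 0, _ => 0
  | _ + 1, n => n.1 0

theorem le_lead {p : ℕ} (n : DecTuple p) (i : Fin p) : n.1 i ≤ n.lead := by
  cases p with
  | zero => exact i.elim0
  | succ p => exact n.2.1.antitone (Fin.zero_le i)

def tail {p : ℕ} (n : DecTuple (p + 1)) : DecTuple p :=
  ⟨Fin.tail n.1, fun _ _ hij => n.2.1 (Fin.succ_lt_succ_iff.2 hij), fun i => n.2.2 i.succ⟩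

theorem lead_tail_lt {p : ℕ} (n : DecTuple (p + 1)) : n.tail.lead < n.1 0 := by
  cases p with
  | zero => exact n.2.2 0
  | succ p => exact n.2.1 (Fin.succ_pos 0)

def consEquiv (p : ℕ) : ℕ × DecTuple p ≃ DecTuple (p + 1) where
  toFun q := ⟨Fin.cons (q.1 + q.2.lead + 1) q.2.1,
    (Fin.liftFun_cons (· > ·)).2
      ⟨fun i => Nat.lt_succ_of_le ((q.2.le_lead i).trans le_add_self), q.2.2.1⟩,
    fun i => Fin.cases (Nat.succ_pos _) q.2.2.2 i⟩
  invFun n := (n.1 0 - n.tail.lead - 1, n.tail)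
  left_inv := fun ⟨m, n⟩ => Prod.ext (show m + n.lead + 1 - n.lead - 1 = m by omega) rfl
  right_inv n := by
    have := n.lead_tail_lt
    ext i
    cases i using Fin.cases
    · show n.1 0 - n.tail.lead - 1 + n.tail.lead + 1 = n.1 0
      omega
    · rfl

theorem lead_consEquiv {p : ℕ} (m : ℕ) (n : DecTuple p) :
    (consEquiv p (m, n)).lead = m + n.lead + 1 := rfl

end DecTuple

open DecTuple

noncomputable def zetaTerm {p : ℕ} (e f : Fin p → ℕ) : ℝ≥0∞ :=
  ∏ i, (f i : ℝ≥0∞)⁻¹ ^ e i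

theorem zetaTerm_cons {p : ℕ} (a : ℕ) (e f : Fin p → ℕ) (v : ℕ) :
    zetaTerm (Fin.cons a e) (Fin.cons v f) = (v : ℝ≥0∞)⁻¹ ^ a * zetaTerm e f := by
  simp [zetaTerm, Fin.prod_univ_succ]

noncomputable def multiPolylog {p : ℕ} (e : Fin p → ℕ) (x : ℝ) : ℝ≥0∞ :=
  ∑' n : DecTuple p, zetaTerm e n.1 * ENNReal.ofReal x ^ n.lead

theorem multiPolylog_zero (e : Fin 0 → ℕ) (x : ℝ) : multiPolylog e x = 1 := by
  simp [multiPolylog, zetaTerm, lead]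

theorem multiPolylog_one {p : ℕ} (e : Fin p → ℕ) :
    multiPolylog e 1 = ∑' n : DecTuple p, zetaTerm e n.1 := by
  simp [multiPolylog]

theorem lintegral_ofReal_pow {x : ℝ} (hx : 0 ≤ x) (m : ℕ) :
    ∫⁻ s in Ioo 0 x, ENNReal.ofReal s ^ m =
      ENNReal.ofReal x ^ (m + 1) * ((m + 1 : ℕ) : ℝ≥0∞)⁻¹ := by
  have hint : IntegrableOn (fun s : ℝ => s ^ m) (Ioo 0 x) :=
    (continuous_pow m).integrableOn_Icc.mono_set Ioo_subset_Icc_self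
  rw [setLIntegral_congr_fun measurableSet_Ioo fun s hs => (ENNReal.ofReal_pow hs.1.le m).symm,
    ← ofReal_integral_eq_lintegral_ofReal hint
      ((ae_restrict_mem measurableSet_Ioo).mono fun s hs => pow_nonneg hs.1.le m),
    ← integral_Ioc_eq_integral_Ioo, ← intervalIntegral.integral_of_le hx, integral_pow,
    ← ENNReal.ofReal_pow hx, ← ENNReal.ofReal_natCast,
    ← ENNReal.ofReal_inv_of_pos (by positivity), ← ENNReal.ofReal_mul (by positivity)]
  push_cast
  ring_nf

theorem lintegral_h_false_mul_multiPolylog {p : ℕ} (a : ℕ) (e : Fin p → ℕ) {x : ℝ}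
    (hx : 0 ≤ x) :
    ∫⁻ s in Ioo 0 x, ENNReal.ofReal (h false s) * multiPolylog (Fin.cons a e) s =
      multiPolylog (Fin.cons (a + 1) e) x := by
  have hpt : ∀ s ∈ Ioo 0 x, ENNReal.ofReal (h false s) * multiPolylog (Fin.cons a e) s =
      ∑' n : DecTuple (p + 1), zetaTerm (Fin.cons a e) n.1 * ENNReal.ofReal s ^ (n.1 0 - 1) := by
    intro s hs
    rw [ofReal_h_false hs.1, multiPolylog, ← ENNReal.tsum_mul_left]
    refine tsum_congr fun n => ?_
    have hn : n.lead = n.1 0 - 1 + 1 := (Nat.sub_add_cancel (n.2.2 0)).symm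
    rw [hn, pow_succ', mul_left_comm, ← mul_assoc (ENNReal.ofReal s)⁻¹,
      ENNReal.inv_mul_cancel (ENNReal.ofReal_pos.2 hs.1).ne' ENNReal.ofReal_ne_top, one_mul]
  rw [setLIntegral_congr_fun measurableSet_Ioo hpt, lintegral_tsum fun n =>
    ((ENNReal.measurable_ofReal.pow_const _).const_mul _).aemeasurable, multiPolylog]
  refine tsum_congr fun n => ?_
  rw [lintegral_const_mul _ (ENNReal.measurable_ofReal.pow_const _), lintegral_ofReal_pow hx,
    Nat.sub_add_cancel (n.2.2 0), ← Fin.cons_self_tail n.1, zetaTerm_cons, zetaTerm_cons,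
    pow_succ]
  simp only [Fin.cons_zero, lead]
  ring

theorem lintegral_h_true_mul_multiPolylog {p : ℕ} (e : Fin p → ℕ) {x : ℝ} (hx₀ : 0 ≤ x)
    (hx₁ : x ≤ 1) :
    ∫⁻ s in Ioo 0 x, ENNReal.ofReal (h true s) * multiPolylog e s =
      multiPolylog (Fin.cons 1 e) x := by
  have hpt : ∀ s ∈ Ioo 0 x, ENNReal.ofReal (h true s) * multiPolylog e s =
      ∑' q : ℕ × DecTuple p, zetaTerm e q.2.1 * ENNReal.ofReal s ^ (q.1 + q.2.lead) := by
    intro s hs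
    rw [ofReal_h_true hs.1.le (hs.2.trans_le hx₁), multiPolylog, ← ENNReal.tsum_mul_right,
      ENNReal.tsum_prod']
    refine tsum_congr fun m => ?_
    rw [← ENNReal.tsum_mul_left]
    exact tsum_congr fun n => by ring
  -- `x^(m + n₁ + 1) / (m + n₁ + 1)` is the term of `Li_{1,e}(x)` with leading index `m + n₁ + 1`
  rw [setLIntegral_congr_fun measurableSet_Ioo hpt, lintegral_tsum fun n =>
    ((ENNReal.measurable_ofReal.pow_const _).const_mul _).aemeasurable, multiPolylog,
    ← (consEquiv p).tsum_eq]
  refine tsum_congr fun q => ?_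
  rw [lintegral_const_mul _ (ENNReal.measurable_ofReal.pow_const _), lintegral_ofReal_pow hx₀,
    lead_consEquiv]
  simp only [consEquiv, Equiv.coe_fn_mk, zetaTerm_cons]
  ring

theorem word_cons (a : ℕ) (k : List ℕ) :
    word (a :: k) = word k ++ true :: List.replicate (a - 1) false := by
  simp [word]

theorem get_cons_eq_finCons (a : ℕ) (k : List ℕ) : (a :: k).get = Fin.cons a k.get :=
  funext fun i => by cases i using Fin.cases <;> rfl

theorem wordIntegral_append_true_replicate_false {w : List Bool} {p : ℕ} {e : Fin p → ℕ}
    (hw : EqOn (wordIntegral w) (multiPolylog e) (Icc 0 1)) (m : ℕ) :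
    EqOn (wordIntegral (w ++ true :: List.replicate m false))
      (multiPolylog (Fin.cons (m + 1) e)) (Icc 0 1) := by
  have sub : ∀ {x}, x ∈ Icc (0 : ℝ) 1 → Ioo 0 x ⊆ Icc 0 1 :=
    fun hx s hs => ⟨hs.1.le, hs.2.le.trans hx.2⟩
  induction m with
  | zero =>
    intro x hx
    rw [List.replicate_zero, wordIntegral_concat,
      setLIntegral_congr_fun measurableSet_Ioo fun s hs => by rw [hw (sub hx hs)],
      lintegral_h_true_mul_multiPolylog e hx.1 hx.2]
  | succ m ih =>
    intro x hx
    rw [List.replicate_succ', ← List.cons_append, ← List.append_assoc, wordIntegral_concat,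
      setLIntegral_congr_fun measurableSet_Ioo fun s hs => by rw [ih (sub hx hs)],
      lintegral_h_false_mul_multiPolylog _ e hx.1]

theorem wordIntegral_word {k : List ℕ} (hk : ∀ a ∈ k, 0 < a) :
    EqOn (wordIntegral (word k)) (multiPolylog k.get) (Icc 0 1) := by
  induction k with
  | nil => intro x _; rw [multiPolylog_zero]; exact wordIntegral_nil x
  | cons a k ih =>
    have := wordIntegral_append_true_replicate_false
      (ih fun b hb => hk b (List.mem_cons_of_mem a hb)) (a - 1)
    rwa [Nat.sub_add_cancel (hk a List.mem_cons_self), ← get_cons_eq_finCons, ← word_cons]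
      at this

theorem sum_range_inv_sq_le (c N : ℕ) :
    ∑ m ∈ Finset.range N, (((m + c + 1 : ℕ) : ℝ) ^ 2)⁻¹ ≤ 2 / (c + 1) := by
  have := sum_Ioo_inv_sq_le (α := ℝ) c (c + 1 + N)
  rw [← Finset.Ico_add_one_left_eq_Ioo, Finset.sum_Ico_eq_sum_range,
    Nat.add_sub_cancel_left] at this
  exact (Finset.sum_congr rfl fun m _ => by rw [show m + c + 1 = c + 1 + m by omega]).trans_le this

theorem tsum_inv_pow_le {a : ℕ} (ha : 2 ≤ a) (c : ℕ) :
    ∑' m : ℕ, ((m + c + 1 : ℕ) : ℝ≥0∞)⁻¹ ^ a ≤ 2 * ((c + 1 : ℕ) : ℝ≥0∞)⁻¹ := by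
  refine ENNReal.tsum_le_of_sum_range_le fun N => ?_
  calc ∑ m ∈ Finset.range N, ((m + c + 1 : ℕ) : ℝ≥0∞)⁻¹ ^ a
      ≤ ∑ m ∈ Finset.range N, ((m + c + 1 : ℕ) : ℝ≥0∞)⁻¹ ^ 2 :=
        Finset.sum_le_sum fun m _ =>
          pow_le_pow_right_of_le_one' (ENNReal.inv_le_one.2 (Nat.one_le_cast.2 (by omega))) ha
    _ = ENNReal.ofReal (∑ m ∈ Finset.range N, (((m + c + 1 : ℕ) : ℝ) ^ 2)⁻¹) := by
        rw [ENNReal.ofReal_sum_of_nonneg fun m _ => by positivity]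
        refine Finset.sum_congr rfl fun m _ => ?_
        rw [ENNReal.ofReal_inv_of_pos (by positivity), ENNReal.ofReal_pow (by positivity),
          ENNReal.ofReal_natCast, ENNReal.inv_pow]
    _ ≤ ENNReal.ofReal (2 / (c + 1)) := ENNReal.ofReal_le_ofReal (sum_range_inv_sq_le c N)
    _ = 2 * ((c + 1 : ℕ) : ℝ≥0∞)⁻¹ := by
        rw [div_eq_mul_inv, ENNReal.ofReal_mul zero_le_two,
          ENNReal.ofReal_inv_of_pos (by positivity)]
        norm_cast

theorem tsum_zetaTerm_cons {p : ℕ} (a : ℕ) (e : Fin p → ℕ) :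
    ∑' n : DecTuple (p + 1), zetaTerm (Fin.cons a e) n.1 =
      ∑' n : DecTuple p, (∑' m : ℕ, ((m + n.lead + 1 : ℕ) : ℝ≥0∞)⁻¹ ^ a) * zetaTerm e n.1 := by
  rw [← (consEquiv p).tsum_eq, ENNReal.tsum_prod', ENNReal.tsum_comm]
  refine tsum_congr fun n => ?_
  rw [← ENNReal.tsum_mul_right]
  exact tsum_congr fun m => zetaTerm_cons a e n.1 _

theorem tsum_zetaTerm_lt_top {p a : ℕ} {e : Fin p → ℕ} (ha : 2 ≤ a) (he : ∀ i, 0 < e i) :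
    ∑' n : DecTuple (p + 1), zetaTerm (Fin.cons a e) n.1 < ⊤ := by
  induction p generalizing a with
  | zero =>
    rw [tsum_zetaTerm_cons]
    simpa [zetaTerm, lead] using (tsum_inv_pow_le ha 0).trans_lt (by simp)
  | succ p ih =>
    have hS : ∀ n : DecTuple (p + 1),
        ∑' m : ℕ, ((m + n.lead + 1 : ℕ) : ℝ≥0∞)⁻¹ ^ a ≤ 2 * ((n.1 0 : ℕ) : ℝ≥0∞)⁻¹ := fun n =>
      (tsum_inv_pow_le ha _).trans (by gcongr; exact n.lead.le_succ)
    rw [tsum_zetaTerm_cons, ← Fin.cons_self_tail e]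
    calc ∑' n : DecTuple (p + 1), (∑' m : ℕ, ((m + n.lead + 1 : ℕ) : ℝ≥0∞)⁻¹ ^ a) *
          zetaTerm (Fin.cons (e 0) (Fin.tail e)) n.1
        ≤ ∑' n : DecTuple (p + 1), 2 * zetaTerm (Fin.cons (e 0 + 1) (Fin.tail e)) n.1 := by
          refine ENNReal.tsum_le_tsum fun n => ?_
          rw [← Fin.cons_self_tail n.1, zetaTerm_cons, zetaTerm_cons]
          calc _ ≤ 2 * ((n.1 0 : ℕ) : ℝ≥0∞)⁻¹ * (((n.1 0 : ℕ) : ℝ≥0∞)⁻¹ ^ e 0 *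
                zetaTerm (Fin.tail e) (Fin.tail n.1)) := by gcongr; exact hS n
            _ = _ := by ring
      _ < ⊤ := by
          rw [ENNReal.tsum_mul_left]
          exact ENNReal.mul_lt_top (by simp) (ih (by have := he 0; omega) fun i => he i.succ)

theorem toReal_tsum_zetaTerm {p : ℕ} (e : Fin p → ℕ) :
    (∑' n : DecTuple p, zetaTerm e n.1).toReal =
      ∑' n : DecTuple p, ∏ i, (1 : ℝ) / (n.1 i : ℝ) ^ e i := by
  have hne : ∀ (n : DecTuple p) i, ((n.1 i : ℝ≥0∞))⁻¹ ^ e i ≠ ⊤ := fun n i =>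
    ENNReal.pow_ne_top (ENNReal.inv_ne_top.2 (Nat.cast_ne_zero.2 (n.2.2 i).ne'))
  rw [ENNReal.tsum_toReal_eq (f := fun n : DecTuple p => zetaTerm e n.1)
    fun n => ENNReal.prod_ne_top fun i _ => hne n i]
  simp [zetaTerm, ENNReal.toReal_prod]

theorem integrableOn_and_integral_eq_toReal_lintegral {α : Type*} [MeasurableSpace α]
    {μ : Measure α} {s : Set α} {f : α → ℝ} (hs : MeasurableSet s)
    (hf : AEStronglyMeasurable f (μ.restrict s)) (hf₀ : ∀ x ∈ s, 0 ≤ f x)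
    (hfin : ∫⁻ x in s, ENNReal.ofReal (f x) ∂μ ≠ ⊤) :
    IntegrableOn f s μ ∧ ∫ x in s, f x ∂μ = (∫⁻ x in s, ENNReal.ofReal (f x) ∂μ).toReal := by
  have hf₀' : 0 ≤ᵐ[μ.restrict s] f := (ae_restrict_mem hs).mono hf₀
  exact ⟨(lintegral_ofReal_ne_top_iff_integrable hf hf₀').1 hfin,
    integral_eq_lintegral_of_nonneg_ae hf₀' hf⟩

end Kontsevich

open Kontsevich in
theorem kontsevich_integral (k : List ℕ)
    (hk : ∀ a ∈ k, 0 < a) (hk1 : 2 ≤ k.headI) :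
    IntegrableOn
      (fun t : Fin (word k).length → ℝ => ∏ i : Fin (word k).length, h ((word k).get i) (t i))
      (simplex (word k).length) volume ∧
    (∫ t in simplex (word k).length,
        ∏ i : Fin (word k).length, h ((word k).get i) (t i)) = zeta k := by
  obtain ⟨a, k, rfl⟩ : ∃ a k', k = a :: k' :=
    List.exists_cons_of_ne_nil (by rintro rfl; simp at hk1)
  rw [simplex_eq_simplexBelow]
  have hlint : ∫⁻ t in simplexBelow (word (a :: k)).length 1,
      ENNReal.ofReal (∏ i, h ((word (a :: k)).get i) (t i)) =
        ∑' n : DecTuple (k.length + 1), zetaTerm (a :: k).get n.1 := calc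
    _ = wordIntegral (word (a :: k)) 1 := setLIntegral_congr_fun (measurableSet_simplexBelow _ 1)
          fun t ht => ENNReal.ofReal_prod_of_nonneg fun i _ => h_nonneg _ (ht.2 i)
    _ = multiPolylog (a :: k).get 1 := wordIntegral_word hk ⟨zero_le_one, le_rfl⟩
    _ = _ := multiPolylog_one _
  have hfin : ∑' n : DecTuple (k.length + 1), zetaTerm (a :: k).get n.1 < ⊤ :=
    get_cons_eq_finCons a k ▸
      tsum_zetaTerm_lt_top hk1 fun i => hk _ (List.mem_cons_of_mem a (k.get_mem i))
  obtain ⟨hint, heq⟩ := integrableOn_and_integral_eq_toReal_lintegral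
    (measurableSet_simplexBelow _ 1)
    (measurable_prod_apply fun _ => measurable_h _).aestronglyMeasurable
    (fun t ht => Finset.prod_nonneg fun i _ => h_nonneg _ (ht.2 i)) (hlint ▸ hfin.ne)
  exact ⟨hint, by rw [heq, hlint, toReal_tsum_zetaTerm]; rfl⟩
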